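/- arXiv:2603.24443 — 2 statements merged into one kernel-verified Lean document; each statement's English description precedes it below -/
import Mathlib

section
/- Distribution of spatial moves along until: for all HSTL formulas φ and ψ and every spatial modality D ∈ {F, B, L, R}, the formula D(φ U ψ) ↔ (Dφ) U (Dψ) is valid, i.e., for every grid size m×n, every trace t⃗, and every position p_{i,j}, t⃗, p_{i,j} ⊨ D(φ U ψ) if and only if t⃗, p_{i,j} ⊨ (Dφ) U (Dψ). -/
/-- Syntax of HSTL formulas over atomic propositions `AP` and nominals `NP`. -/
inductive HSTL (AP NP : Type) : Type
  | top   : HSTL AP NP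
  | atom  : AP → HSTL AP NP
  | nom   : NP → HSTL AP NP
  | neg   : HSTL AP NP → HSTL AP NP
  | conj  : HSTL AP NP → HSTL AP NP → HSTL AP NP
  | next  : HSTL AP NP → HSTL AP NP
  | untl  : HSTL AP NP → HSTL AP NP → HSTL AP NP
  | front : HSTL AP NP → HSTL AP NP
  | back  : HSTL AP NP → HSTL AP NP
  | left  : HSTL AP NP → HSTL AP NP
  | right : HSTL AP NP → HSTL AP NP
  | at_   : NP → HSTL AP NP → HSTL AP NP
  | bind  : NP → HSTL AP NP → HSTL AP NP

/-- A state over an `m × n` grid: a valuation of atomic propositions as sets of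
positions, and of nominals as positions.  Positions `p_{i,j}` (1 ≤ i ≤ m, 1 ≤ j ≤ n)
are encoded as elements of `Fin m × Fin n` (0-indexed). -/
structure HState (AP NP : Type) (m n : ℕ) where
  x : AP → Set (Fin m × Fin n)
  y : NP → Fin m × Fin n

/-- Update the position of nominal `v` to `p` in a single state. -/
def HState.updNom {AP NP : Type} {m n : ℕ} [DecidableEq NP]
    (s : HState AP NP m n) (v : NP) (p : Fin m × Fin n) : HState AP NP m n :=
  ⟨s.x, Function.update s.y v p⟩

/-- Satisfaction `t⃗, p ⊨ φ`.  A trace is a (nonempty) list of states; `t.drop k`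
is the suffix `t⃗^k`. -/
def Sat {AP NP : Type} [DecidableEq NP] {m n : ℕ} :
    HSTL AP NP → List (HState AP NP m n) → Fin m × Fin n → Prop
  | .top, _, _ => True
  | .atom a, t, p => ∃ s, t.head? = some s ∧ p ∈ s.x a
  | .nom v, t, p => ∃ s, t.head? = some s ∧ p = s.y v
  | .neg φ, t, p => ¬ Sat φ t p
  | .conj φ ψ, t, p => Sat φ t p ∧ Sat ψ t p
  | .next φ, t, p => 1 < t.length ∧ Sat φ (t.drop 1) p
  | .untl φ ψ, t, p =>
      ∃ k < t.length, Sat ψ (t.drop k) p ∧ ∀ l < k, Sat φ (t.drop l) p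
  | .front φ, t, p => ∃ h : p.1.val + 1 < m, Sat φ t (⟨p.1.val + 1, h⟩, p.2)
  | .back φ, t, p => ∃ _h : 0 < p.1.val,
      Sat φ t (⟨p.1.val - 1, Nat.lt_of_le_of_lt (Nat.sub_le _ _) p.1.isLt⟩, p.2)
  | .left φ, t, p => ∃ _h : 0 < p.2.val,
      Sat φ t (p.1, ⟨p.2.val - 1, Nat.lt_of_le_of_lt (Nat.sub_le _ _) p.2.isLt⟩)
  | .right φ, t, p => ∃ h : p.2.val + 1 < n, Sat φ t (p.1, ⟨p.2.val + 1, h⟩)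
  | .at_ v φ, t, p => ∃ s, t.head? = some s ∧ Sat φ t (s.y v)
  | .bind v φ, t, p => Sat φ (t.map (fun s => s.updNom v p)) p

/-- Derived operator `◊φ := ⊤ U φ`. -/
def HSTL.ev {AP NP : Type} (φ : HSTL AP NP) : HSTL AP NP := .untl .top φ

/-- Derived operator `□φ := ¬◊¬φ`. -/
def HSTL.alw {AP NP : Type} (φ : HSTL AP NP) : HSTL AP NP := .neg (HSTL.ev (.neg φ))

/-- Spatial modalities `D ∈ {F, B, L, R}`. -/
inductive Dir : Type
  | front | back | left | right

/-- Apply a spatial modality to a formula. -/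
def Dir.app {AP NP : Type} : Dir → HSTL AP NP → HSTL AP NP
  | .front, φ => .front φ
  | .back,  φ => .back φ
  | .left,  φ => .left φ
  | .right, φ => .right φ

theorem stmt_11 (AP NP : Type) [DecidableEq NP] (φ ψ : HSTL AP NP) (D : Dir)
    (m n : ℕ) (t : List (HState AP NP m n)) (ht : t ≠ []) (p : Fin m × Fin n) :
    Sat (D.app (.untl φ ψ)) t p ↔ Sat (.untl (D.app φ) (D.app ψ)) t p := by
  cases D <;> simp only [Dir.app, Sat] <;> constructor
  · rintro ⟨h, k, hk, hψ, hφ⟩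
    exact ⟨k, hk, ⟨h, hψ⟩, fun l hl => ⟨h, hφ l hl⟩⟩
  · rintro ⟨k, hk, ⟨h, hψ⟩, hφ⟩
    exact ⟨h, k, hk, hψ, fun l hl => (hφ l hl).2⟩
  · rintro ⟨h, k, hk, hψ, hφ⟩
    exact ⟨k, hk, ⟨h, hψ⟩, fun l hl => ⟨h, hφ l hl⟩⟩
  · rintro ⟨k, hk, ⟨h, hψ⟩, hφ⟩
    exact ⟨h, k, hk, hψ, fun l hl => (hφ l hl).2⟩
  · rintro ⟨h, k, hk, hψ, hφ⟩
    exact ⟨k, hk, ⟨h, hψ⟩, fun l hl => ⟨h, hφ l hl⟩⟩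
  · rintro ⟨k, hk, ⟨h, hψ⟩, hφ⟩
    exact ⟨h, k, hk, hψ, fun l hl => (hφ l hl).2⟩
  · rintro ⟨h, k, hk, hψ, hφ⟩
    exact ⟨k, hk, ⟨h, hψ⟩, fun l hl => ⟨h, hφ l hl⟩⟩
  · rintro ⟨k, hk, ⟨h, hψ⟩, hφ⟩
    exact ⟨h, k, hk, hψ, fun l hl => (hφ l hl).2⟩
end

section
/- Distribution of binder along until: for every nominal v ∈ NP and all HSTL formulas φ and ψ, the formula ↓v(φ U ψ) ↔ (↓v φ) U (↓v ψ) is valid, i.e., for every grid size m×n, every trace t⃗, and every position p_{i,j}, t⃗, p_{i,j} ⊨ ↓v(φ U ψ) if and only if t⃗, p_{i,j} ⊨ (↓v φ) U (↓v ψ). -/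
theorem stmt_18 (AP NP : Type) [DecidableEq NP] (v : NP) (φ ψ : HSTL AP NP)
    (m n : ℕ) (t : List (HState AP NP m n)) (ht : t ≠ []) (p : Fin m × Fin n) :
    Sat (.bind v (.untl φ ψ)) t p ↔ Sat (.untl (.bind v φ) (.bind v ψ)) t p := by
  simp only [Sat, List.length_map, ← List.map_drop]
end
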